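/- Nakhleh's measure m, defined for phylogenetic networks N1, N2 on the same taxa set via maximal sets of pairwise non-equivalent nodes U(N1), U(N2) and the counts δ, equals half the cardinality of the symmetric difference of nested labels representations: m(N1,N2) = (1/2)|Υ(N1) △ Υ(N2)|. -/

import Mathlib

open scoped Classical

/-- Nested-label encoding type at nesting depth `n`: an atom of `S`, or a
multiset of encodings of smaller depth. -/
def NLT (S : Type) : ℕ → Type :=
  fun n => Nat.rec S (fun _ ih => S ⊕ Multiset ih) n

/-- A phylogenetic network on a set `S` of taxa: a rooted finite DAG whose
leaves are bijectively labeled by `S`. -/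
structure PhyloNetwork (S : Type) [Fintype S] : Type 1 where
  V : Type
  fintypeV : Fintype V
  arc : V → V → Prop
  acyclic : ∀ v, ¬ Relation.TransGen arc v v
  root : V
  rootConn : ∀ v, Relation.ReflTransGen arc root v
  lab : V → S
  labBij : ∀ s : S, ∃! v, (∀ w, ¬ arc v w) ∧ lab v = s

attribute [instance] PhyloNetwork.fintypeV

variable {S : Type} [Fintype S]

def PhyloNetwork.IsLeaf (N : PhyloNetwork S) (v : N.V) : Prop := ∀ w, ¬ N.arc v w

noncomputable def PhyloNetwork.children (N : PhyloNetwork S) (v : N.V) : Multiset N.V :=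
  (Finset.univ.filter (fun w => N.arc v w)).val

/-- The nested label of a node, encoded at depth `n` (meaningful as soon as
`n` exceeds the height of the node). -/
noncomputable def nlAux (N : PhyloNetwork S) : (n : ℕ) → N.V → NLT S n
  | 0 => fun v => N.lab v
  | n+1 => fun v =>
      if N.IsLeaf v then Sum.inl (N.lab v)
      else Sum.inr ((N.children v).map (nlAux N n))

/-- A sufficient encoding depth for comparing nodes of the two networks. -/
def fuel (N1 N2 : PhyloNetwork S) : ℕ := Fintype.card N1.V + Fintype.card N2.V

/-- `ℓ(u) = ℓ(v)`: the nested labels of `u` and `v` coincide. -/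
def sameNL (N1 N2 : PhyloNetwork S) (u : N1.V) (v : N2.V) : Prop :=
  ∀ n, fuel N1 N2 ≤ n → nlAux N1 n u = nlAux N2 n v

/-- Symmetric difference of multisets. -/
noncomputable def msd {X : Type*} (M1 M2 : Multiset X) : Multiset X :=
  (M1 - M2) + (M2 - M1)

/-- The nested labels representation `Υ(N)` (at encoding depth `n`). -/
noncomputable def upsilon (N : PhyloNetwork S) (n : ℕ) : Multiset (NLT S n) :=
  Finset.univ.val.map (nlAux N n)

/-- Nakhleh's dissimilarity measure `m`. -/
noncomputable def mdist (N1 N2 : PhyloNetwork S) : ℝ :=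
  (Multiset.card (msd (upsilon N1 (fuel N1 N2)) (upsilon N2 (fuel N1 N2))) : ℝ) / 2

/-- `m_i(v)`: number of directed paths from `v` to the leaf labeled `i`. -/
noncomputable def PhyloNetwork.mu (N : PhyloNetwork S) (v : N.V) (i : S) : ℕ :=
  Set.ncard {l : List N.V | l.Chain' N.arc ∧ l.head? = some v ∧
    ∃ w, l.getLast? = some w ∧ N.IsLeaf w ∧ N.lab w = i}

/-- The μ-representation of `N`: the multiset of μ-vectors of its nodes. -/
noncomputable def muRep (N : PhyloNetwork S) : Multiset (S → ℕ) :=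
  Finset.univ.val.map (fun v => N.mu v)

/-- The μ-distance. -/
noncomputable def dmu (N1 N2 : PhyloNetwork S) : ℝ :=
  (Multiset.card (msd (muRep N1) (muRep N2)) : ℝ) / 2

/-- Number of directed paths between two nodes. -/
noncomputable def numPaths (N : PhyloNetwork S) (u w : N.V) : ℕ :=
  Set.ncard {l : List N.V | l.Chain' N.arc ∧ l.head? = some u ∧ l.getLast? = some w}

/-- Leaf-label preserving isomorphism of phylogenetic networks. -/
def PhyloIso (N1 N2 : PhyloNetwork S) : Prop :=
  ∃ e : N1.V ≃ N2.V, (∀ u v, N1.arc u v ↔ N2.arc (e u) (e v)) ∧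
    ∀ v, N1.IsLeaf v → N2.lab (e v) = N1.lab v

/-- Height of a node: the largest length of a directed path from it to a leaf. -/
noncomputable def PhyloNetwork.height (N : PhyloNetwork S) (v : N.V) : ℕ :=
  sSup {k | ∃ l : List N.V, l.Chain' N.arc ∧ l.head? = some v ∧
    (∃ w, l.getLast? = some w ∧ N.IsLeaf w) ∧ l.length = k + 1}

/-- `κ(v)`: the number of nodes of `N` with the same nested label as `v`. -/
noncomputable def kappa (N : PhyloNetwork S) (v : N.V) : ℕ :=
  Nat.card {w : N.V // sameNL N N w v}
section Helpers

variable {S : Type} [Fintype S]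

lemma chain'_nodup (N : PhyloNetwork S) {l : List N.V} (h : l.Chain' N.arc) : l.Nodup := by
  have h2 : l.Chain' (Relation.TransGen N.arc) := h.imp (fun _ _ hab => Relation.TransGen.single hab)
  have ht : IsTrans N.V (Relation.TransGen N.arc) :=
    ⟨fun _ _ _ hab hbc => hab.trans hbc⟩
  have hp := List.isChain_iff_pairwise.mp h2
  exact hp.imp (fun {a b} hab => fun (e : a = b) => N.acyclic b (by rwa [e] at hab))

lemma wf_rev (N : PhyloNetwork S) : WellFounded (fun c v : N.V => N.arc v c) := by
  letI : IsTrans N.V (fun a b : N.V => Relation.TransGen N.arc b a) :=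
    ⟨fun _ _ _ hab hbc => Relation.TransGen.trans hbc hab⟩
  letI : IsIrrefl N.V (fun a b : N.V => Relation.TransGen N.arc b a) :=
    ⟨fun a h => N.acyclic a h⟩
  exact Subrelation.wf (@fun a b h => Relation.TransGen.single h)
    (Finite.wellFounded_of_trans_of_irrefl
      (fun a b : N.V => Relation.TransGen N.arc b a))

lemma exists_leaf_path (N : PhyloNetwork S) (v : N.V) :
    ∃ l : List N.V, l.Chain' N.arc ∧ l.head? = some v ∧
      ∃ w, l.getLast? = some w ∧ N.IsLeaf w := by
  refine WellFounded.induction (wf_rev N)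
    (C := fun v => ∃ l : List N.V, l.Chain' N.arc ∧ l.head? = some v ∧
      ∃ w, l.getLast? = some w ∧ N.IsLeaf w) v ?_
  intro v ih
  by_cases hv : N.IsLeaf v
  · exact ⟨[v], List.isChain_singleton v, by simp, v, by simp, hv⟩
  · simp only [PhyloNetwork.IsLeaf, not_forall, not_not] at hv
    obtain ⟨c, hc⟩ := hv
    obtain ⟨l, hl, hhd, w, hlast, hw⟩ := ih c hc
    cases l with
    | nil => simp at hhd
    | cons a t =>
      have hac : a = c := by simpa using hhd
      subst hac
      refine ⟨v :: a :: t, List.isChain_cons_cons.mpr ⟨hc, hl⟩, rfl, w, ?_, hw⟩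
      rwa [List.getLast?_cons_cons]

/-- The set whose sup defines the height. -/
def hset (N : PhyloNetwork S) (v : N.V) : Set ℕ :=
  {k | ∃ l : List N.V, l.Chain' N.arc ∧ l.head? = some v ∧
    (∃ w, l.getLast? = some w ∧ N.IsLeaf w) ∧ l.length = k + 1}

lemma height_def (N : PhyloNetwork S) (v : N.V) : N.height v = sSup (hset N v) := rfl

lemma hset_bdd (N : PhyloNetwork S) (v : N.V) : ∀ k ∈ hset N v, k < Fintype.card N.V := by
  rintro k ⟨l, hl, hhd, _, hlen⟩
  have := (chain'_nodup N hl).length_le_card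
  omega

lemma hset_nonempty (N : PhyloNetwork S) (v : N.V) : (hset N v).Nonempty := by
  obtain ⟨l, hl, hhd, w, hlast, hw⟩ := exists_leaf_path N v
  have hne : l ≠ [] := by rintro rfl; simp at hhd
  have hlen : 1 ≤ l.length := List.length_pos_iff.mpr hne
  exact ⟨l.length - 1, l, hl, hhd, ⟨w, hlast, hw⟩, by omega⟩

lemma height_mem (N : PhyloNetwork S) (v : N.V) : N.height v ∈ hset N v :=
  Nat.sSup_mem (hset_nonempty N v)
    ⟨Fintype.card N.V, fun k hk => (hset_bdd N v k hk).le⟩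

lemma le_height (N : PhyloNetwork S) (v : N.V) {k : ℕ} (hk : k ∈ hset N v) :
    k ≤ N.height v :=
  le_csSup ⟨Fintype.card N.V, fun j hj => (hset_bdd N v j hj).le⟩ hk

lemma height_lt_card (N : PhyloNetwork S) (v : N.V) :
    N.height v < Fintype.card N.V :=
  hset_bdd N v _ (height_mem N v)

lemma height_lt_of_arc (N : PhyloNetwork S) {u c : N.V} (h : N.arc u c) :
    N.height c < N.height u := by
  obtain ⟨l, hl, hhd, hw, hlen⟩ := height_mem N c
  cases l with
  | nil => simp at hhd
  | cons a t =>
    have hac : a = c := by simpa using hhd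
    subst hac
    have hmem : N.height a + 1 ∈ hset N u := by
      obtain ⟨w, hlast, hwleaf⟩ := hw
      refine ⟨u :: a :: t, List.isChain_cons_cons.mpr ⟨h, hl⟩, rfl, ⟨w, ?_, hwleaf⟩, ?_⟩
      · rwa [List.getLast?_cons_cons]
      · simp at hlen ⊢; omega
    have := le_height N u hmem
    omega

lemma one_le_height_of_not_leaf (N : PhyloNetwork S) {u : N.V} (h : ¬ N.IsLeaf u) :
    1 ≤ N.height u := by
  rw [PhyloNetwork.IsLeaf] at h
  push_neg at h
  obtain ⟨c, hc⟩ := h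
  have := height_lt_of_arc N hc
  omega

lemma mem_children {N : PhyloNetwork S} {u c : N.V} :
    c ∈ N.children u ↔ N.arc u c := by
  simp [PhyloNetwork.children]

/-- Multiset transfer lemma. -/
lemma map_eq_map_iff {α β γ γ' : Type*} {f : α → γ} {g : β → γ} {f' : α → γ'} {g' : β → γ'}
    {M1 : Multiset α} {M2 : Multiset β}
    (h : ∀ a ∈ M1, ∀ b ∈ M2, (f a = g b ↔ f' a = g' b)) :
    M1.map f = M2.map g ↔ M1.map f' = M2.map g' := by
  rw [← Multiset.rel_eq, ← Multiset.rel_eq, Multiset.rel_map, Multiset.rel_map]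
  constructor
  · intro hr; exact hr.mono (fun a ha b hb hab => (h a ha b hb).mp hab)
  · intro hr; exact hr.mono (fun a ha b hb hab => (h a ha b hb).mpr hab)

lemma nlAux_zero (N : PhyloNetwork S) (v : N.V) : nlAux N 0 v = N.lab v := rfl

lemma nlAux_succ (N : PhyloNetwork S) (n : ℕ) (v : N.V) :
    nlAux N (n+1) v = if N.IsLeaf v then Sum.inl (N.lab v)
      else Sum.inr ((N.children v).map (nlAux N n)) := rfl

lemma nl_step (n : ℕ) : ∀ (N M : PhyloNetwork S) (u : N.V) (v : M.V),
    N.height u ≤ n → M.height v ≤ n →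
    (nlAux N n u = nlAux M n v ↔ nlAux N (n+1) u = nlAux M (n+1) v) := by
  induction n with
  | zero =>
    intro N M u v hu hv
    have hu' : N.IsLeaf u := by
      by_contra h; have := one_le_height_of_not_leaf N h; omega
    have hv' : M.IsLeaf v := by
      by_contra h; have := one_le_height_of_not_leaf M h; omega
    rw [nlAux_zero, nlAux_zero, nlAux_succ, nlAux_succ, if_pos hu', if_pos hv']
    exact ⟨fun h => by rw [h], fun h => Sum.inl.inj h⟩
  | succ m ih =>
    intro N M u v hu hv
    rw [nlAux_succ, nlAux_succ, nlAux_succ N (m+1), nlAux_succ M (m+1)]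
    by_cases hu' : N.IsLeaf u <;> by_cases hv' : M.IsLeaf v
    · rw [if_pos hu', if_pos hv', if_pos hu', if_pos hv']
      exact ⟨fun h => congrArg Sum.inl (Sum.inl.inj h),
        fun h => congrArg Sum.inl (Sum.inl.inj h)⟩
    · rw [if_pos hu', if_neg hv', if_pos hu', if_neg hv']
      exact iff_of_false (by simp) (by simp)
    · rw [if_neg hu', if_pos hv', if_neg hu', if_pos hv']
      exact iff_of_false (by simp) (by simp)
    · rw [if_neg hu', if_neg hv', if_neg hu', if_neg hv']
      change (Sum.inr _ : S ⊕ Multiset (NLT S m)) = Sum.inr _ ↔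
        (Sum.inr _ : S ⊕ Multiset (NLT S (m+1))) = Sum.inr _
      rw [Sum.inr.injEq, Sum.inr.injEq]
      apply map_eq_map_iff
      intro a ha b hb
      have ha' : N.height a ≤ m := by
        have := height_lt_of_arc N (mem_children.mp ha); omega
      have hb' : M.height b ≤ m := by
        have := height_lt_of_arc M (mem_children.mp hb); omega
      exact ih N M a b ha' hb'

lemma nl_eq_iff_of_le (N M : PhyloNetwork S) (u : N.V) (v : M.V) {a b : ℕ}
    (ha : N.height u ≤ a) (hb : M.height v ≤ a) (hab : a ≤ b) :
    (nlAux N a u = nlAux M a v ↔ nlAux N b u = nlAux M b v) := by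
  induction b, hab using Nat.le_induction with
  | base => rfl
  | succ b hb' ih =>
    exact ih.trans (nl_step b N M u v (ha.trans hb') (hb.trans hb'))

lemma nl_eq_iff (N M : PhyloNetwork S) (u : N.V) (v : M.V) {a b : ℕ}
    (hua : N.height u ≤ a) (hva : M.height v ≤ a)
    (hub : N.height u ≤ b) (hvb : M.height v ≤ b) :
    (nlAux N a u = nlAux M a v ↔ nlAux N b u = nlAux M b v) := by
  rcases le_total a b with h | h
  · exact nl_eq_iff_of_le N M u v hua hva h
  · exact (nl_eq_iff_of_le N M u v hub hvb h).symm

lemma sameNL_iff (N M : PhyloNetwork S) (u : N.V) (v : M.V) {d : ℕ}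
    (hd1 : N.height u ≤ d) (hd2 : M.height v ≤ d) :
    sameNL N M u v ↔ nlAux N d u = nlAux M d v := by
  have hfu : N.height u ≤ fuel N M := by
    have := height_lt_card N u; unfold fuel; omega
  have hfv : M.height v ≤ fuel N M := by
    have := height_lt_card M v; unfold fuel; omega
  constructor
  · intro h
    have h1 := h (fuel N M) le_rfl
    exact (nl_eq_iff N M u v hd1 hd2 hfu hfv).mpr h1
  · intro h m hm
    exact (nl_eq_iff N M u v hd1 hd2 (hfu.trans hm) (hfv.trans hm)).mp h

lemma kappa_eq_count (N : PhyloNetwork S) (v : N.V) {d : ℕ}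
    (hd : Fintype.card N.V ≤ d) :
    kappa N v = Multiset.count (nlAux N d v) (upsilon N d) := by
  have hv : N.height v ≤ d := le_trans (height_lt_card N v).le hd
  rw [kappa, Nat.card_eq_fintype_card, Fintype.card_subtype, upsilon,
    Multiset.count_map]
  rw [Finset.card, Finset.filter_val]
  congr 1
  apply Multiset.filter_congr
  intro w _
  have hw : N.height w ≤ d := le_trans (height_lt_card N w).le hd
  rw [sameNL_iff N N w v hw hv, eq_comm]

lemma card_sub_eq_sum {X : Type*} (A B : Multiset X) :
    Multiset.card (A - B) =
      ∑ x ∈ A.toFinset, (Multiset.count x A - Multiset.count x B) := by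
  rw [← Multiset.toFinset_sum_count_eq (A - B)]
  rw [Finset.sum_subset (Multiset.toFinset_subset.mpr
    (Multiset.subset_of_le (Multiset.sub_le_self A B)))]
  · exact Finset.sum_congr rfl (fun x _ => Multiset.count_sub x A B)
  · intro x _ hx
    exact Multiset.count_eq_zero.mpr (fun h => hx (Multiset.mem_toFinset.mpr h))

end Helpers


/-- Nakhleh's measure `m`, defined via maximal sets `U(N1), U(N2)` of pairwise
non-equivalent nodes and the counts `δ`, equals half the cardinality of the
symmetric difference of the nested labels representations. -/
theorem m_eq_half_symmdiff (N1 N2 : PhyloNetwork S)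
    (U1 : Finset N1.V) (U2 : Finset N2.V)
    (hU1rep : ∀ v : N1.V, ∃ u ∈ U1, sameNL N1 N1 v u)
    (hU1ne : ∀ u ∈ U1, ∀ u' ∈ U1, sameNL N1 N1 u u' → u = u')
    (hU2rep : ∀ v : N2.V, ∃ u ∈ U2, sameNL N2 N2 v u)
    (hU2ne : ∀ u ∈ U2, ∀ u' ∈ U2, sameNL N2 N2 u u' → u = u')
    (δ1 : N1.V → ℕ) (δ2 : N2.V → ℕ)
    (hδ1none : ∀ v1 ∈ U1, (¬ ∃ v2 ∈ U2, sameNL N1 N2 v1 v2) → δ1 v1 = kappa N1 v1)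
    (hδ1some : ∀ v1 ∈ U1, ∀ v2 ∈ U2, sameNL N1 N2 v1 v2 →
      δ1 v1 = kappa N1 v1 - kappa N2 v2)
    (hδ2none : ∀ v2 ∈ U2, (¬ ∃ v1 ∈ U1, sameNL N1 N2 v1 v2) → δ2 v2 = kappa N2 v2)
    (hδ2some : ∀ v2 ∈ U2, ∀ v1 ∈ U1, sameNL N1 N2 v1 v2 →
      δ2 v2 = kappa N2 v2 - kappa N1 v1) :
    mdist N1 N2 = (((∑ v1 ∈ U1, δ1 v1) + (∑ v2 ∈ U2, δ2 v2) : ℕ) : ℝ) / 2 := by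
  classical
  set n := fuel N1 N2 with hn
  have hcard1 : Fintype.card N1.V ≤ n := Nat.le_add_right _ _
  have hcard2 : Fintype.card N2.V ≤ n := Nat.le_add_left _ _
  have hh1 : ∀ v : N1.V, N1.height v ≤ n :=
    fun v => le_trans (height_lt_card N1 v).le hcard1
  have hh2 : ∀ v : N2.V, N2.height v ≤ n :=
    fun v => le_trans (height_lt_card N2 v).le hcard2
  have hmemA : ∀ v : N1.V, nlAux N1 n v ∈ (upsilon N1 n).toFinset := by
    intro v
    rw [Multiset.mem_toFinset, upsilon]
    exact Multiset.mem_map.mpr ⟨v, Finset.mem_univ v, rfl⟩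
  have hmemB : ∀ v : N2.V, nlAux N2 n v ∈ (upsilon N2 n).toFinset := by
    intro v
    rw [Multiset.mem_toFinset, upsilon]
    exact Multiset.mem_map.mpr ⟨v, Finset.mem_univ v, rfl⟩
  have hA : Multiset.card (upsilon N1 n - upsilon N2 n) = ∑ v1 ∈ U1, δ1 v1 := by
    rw [card_sub_eq_sum]
    refine (Finset.sum_bij (fun u _ => nlAux N1 n u) (fun u _ => hmemA u) ?_ ?_ ?_).symm
    · intro u hu u' hu' h
      exact hU1ne u hu u' hu' ((sameNL_iff N1 N1 u u' (hh1 u) (hh1 u')).mpr h)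
    · intro x hx
      rw [Multiset.mem_toFinset, upsilon, Multiset.mem_map] at hx
      obtain ⟨w, _, rfl⟩ := hx
      obtain ⟨u, hu, hs⟩ := hU1rep w
      exact ⟨u, hu, ((sameNL_iff N1 N1 w u (hh1 w) (hh1 u)).mp hs).symm⟩
    · intro u hu
      have hcA : Multiset.count (nlAux N1 n u) (upsilon N1 n) = kappa N1 u :=
        (kappa_eq_count N1 u hcard1).symm
      by_cases hex : ∃ v2 ∈ U2, sameNL N1 N2 u v2
      · obtain ⟨v2, hv2, hs⟩ := hex
        have heq : nlAux N1 n u = nlAux N2 n v2 := hs n le_rfl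
        have hcB : Multiset.count (nlAux N1 n u) (upsilon N2 n) = kappa N2 v2 := by
          rw [heq]; exact (kappa_eq_count N2 v2 hcard2).symm
        rw [hδ1some u hu v2 hv2 hs, hcA, hcB]
      · have hcB : Multiset.count (nlAux N1 n u) (upsilon N2 n) = 0 := by
          rw [Multiset.count_eq_zero]
          intro hmem
          rw [upsilon, Multiset.mem_map] at hmem
          obtain ⟨w2, _, hw2⟩ := hmem
          obtain ⟨u2, hu2, hs2⟩ := hU2rep w2
          have h1 : nlAux N2 n w2 = nlAux N2 n u2 :=
            (sameNL_iff N2 N2 w2 u2 (hh2 w2) (hh2 u2)).mp hs2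
          have h2 : nlAux N1 n u = nlAux N2 n u2 := by rw [← hw2, h1]
          exact hex ⟨u2, hu2, (sameNL_iff N1 N2 u u2 (hh1 u) (hh2 u2)).mpr h2⟩
        rw [hδ1none u hu hex, hcA, hcB, Nat.sub_zero]
  have hB : Multiset.card (upsilon N2 n - upsilon N1 n) = ∑ v2 ∈ U2, δ2 v2 := by
    rw [card_sub_eq_sum]
    refine (Finset.sum_bij (fun u _ => nlAux N2 n u) (fun u _ => hmemB u) ?_ ?_ ?_).symm
    · intro u hu u' hu' h
      exact hU2ne u hu u' hu' ((sameNL_iff N2 N2 u u' (hh2 u) (hh2 u')).mpr h)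
    · intro x hx
      rw [Multiset.mem_toFinset, upsilon, Multiset.mem_map] at hx
      obtain ⟨w, _, rfl⟩ := hx
      obtain ⟨u, hu, hs⟩ := hU2rep w
      exact ⟨u, hu, ((sameNL_iff N2 N2 w u (hh2 w) (hh2 u)).mp hs).symm⟩
    · intro u hu
      have hcB : Multiset.count (nlAux N2 n u) (upsilon N2 n) = kappa N2 u :=
        (kappa_eq_count N2 u hcard2).symm
      by_cases hex : ∃ v1 ∈ U1, sameNL N1 N2 v1 u
      · obtain ⟨v1, hv1, hs⟩ := hex
        have heq : nlAux N1 n v1 = nlAux N2 n u := hs n le_rfl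
        have hcA : Multiset.count (nlAux N2 n u) (upsilon N1 n) = kappa N1 v1 := by
          rw [← heq]; exact (kappa_eq_count N1 v1 hcard1).symm
        rw [hδ2some u hu v1 hv1 hs, hcB, hcA]
      · have hcA : Multiset.count (nlAux N2 n u) (upsilon N1 n) = 0 := by
          rw [Multiset.count_eq_zero]
          intro hmem
          rw [upsilon, Multiset.mem_map] at hmem
          obtain ⟨w1, _, hw1⟩ := hmem
          obtain ⟨u1, hu1, hs1⟩ := hU1rep w1
          have h1 : nlAux N1 n w1 = nlAux N1 n u1 :=
            (sameNL_iff N1 N1 w1 u1 (hh1 w1) (hh1 u1)).mp hs1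
          have h2 : nlAux N1 n u1 = nlAux N2 n u := by rw [← h1, hw1]
          exact hex ⟨u1, hu1, (sameNL_iff N1 N2 u1 u (hh1 u1) (hh2 u)).mpr h2⟩
        rw [hδ2none u hu hex, hcB, hcA, Nat.sub_zero]
  rw [mdist, msd, Multiset.card_add, ← hn, hA, hB]
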